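/- arXiv:2303.10086 — 2 statements merged into one kernel-verified Lean document; each statement's English description precedes it below -/
import Mathlib

section
/- Let p, q ∈ P_d with m = p ∧ q their meet, and let r = (r_1, …, r_d) and n = (n_1, …, n_d) ∈ ℝ^d be decreasingly ordered vectors with nonnegative entries such that ∑_{i=1}^d r_i m_i = ∑_{i=1}^d r_i q_i = 1 and ∑_{i=1}^d n_i r_i m_i = ∑_{i=1}^d n_i r_i q_i = 1. Then n ⊙ r ⊙ m ≺ n ⊙ r ⊙ q, i.e., ∑_{i=1}^k n_i r_i m_i ≤ ∑_{i=1}^k n_i r_i q_i for all k ∈ {1, …, d−1} with equality at k = d. (This is the modular form of the statement that the residual state of the thrifty protocol is majorized by the residual state of the greedy protocol.) -/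
open Finset

noncomputable section

/-- Prefix sum of the first `k` entries of `x` (1-based: `x_1 + ⋯ + x_k`). -/
def pfx (d : ℕ) (x : Fin d → ℝ) (k : ℕ) : ℝ :=
  ∑ i : Fin d, if (i : ℕ) < k then x i else 0

/-- Tail sum `E_l(x) = ∑_{i=l}^d x_i` for 1-based `l ∈ {1,…,d}`; `E_{d+1}(x) = 0`. -/
def Etail (d : ℕ) (x : Fin d → ℝ) (l : ℕ) : ℝ :=
  ∑ i : Fin d, if l ≤ (i : ℕ) + 1 then x i else 0

/-- Membership in `P_d`: decreasingly ordered, nonnegative, summing to 1. -/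
def memP (d : ℕ) (x : Fin d → ℝ) : Prop :=
  (∀ i j : Fin d, i ≤ j → x j ≤ x i) ∧ (∀ i, 0 ≤ x i) ∧ (∑ i, x i) = 1

/-- Majorization `x ≺ y`: all partial sums of `x` bounded by those of `y`, equal total sum. -/
def Maj (d : ℕ) (x y : Fin d → ℝ) : Prop :=
  (∀ k : ℕ, k < d → pfx d x k ≤ pfx d y k) ∧ pfx d x d = pfx d y d

/-- The meet `p ∧ q` of the majorization lattice, defined componentwise. -/
def meet (d : ℕ) (p q : Fin d → ℝ) : Fin d → ℝ :=
  fun i => min (pfx d p ((i : ℕ) + 1)) (pfx d q ((i : ℕ) + 1))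
         - min (pfx d p (i : ℕ)) (pfx d q (i : ℕ))

lemma pfx_zero (d : ℕ) (x : Fin d → ℝ) : pfx d x 0 = 0 := by
  simp [pfx]

lemma pfx_succ (d : ℕ) (x : Fin d → ℝ) (k : ℕ) (hk : k < d) :
    pfx d x (k + 1) = pfx d x k + x ⟨k, hk⟩ := by
  unfold pfx
  have : ∀ i : Fin d, (if (i : ℕ) < k + 1 then x i else 0)
      = (if (i : ℕ) < k then x i else 0) + (if i = ⟨k, hk⟩ then x i else 0) := by
    intro i
    rcases lt_trichotomy (i : ℕ) k with h | h | h
    · have : i ≠ ⟨k, hk⟩ := by intro he; rw [he] at h; simp at h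
      simp [h, Nat.lt_succ_of_lt h, this]
    · have : i = ⟨k, hk⟩ := by ext; simpa using h
      simp [this, h]
    · have h1 : ¬ (i : ℕ) < k + 1 := by omega
      have h2 : ¬ (i : ℕ) < k := by omega
      have : i ≠ ⟨k, hk⟩ := by intro he; rw [he] at h; simp at h
      simp [h1, h2, this]
  rw [Finset.sum_congr rfl (fun i _ => this i), Finset.sum_add_distrib,
    Finset.sum_ite_eq' Finset.univ (⟨k, hk⟩ : Fin d)]
  simp

lemma pfx_all (d : ℕ) (x : Fin d → ℝ) : pfx d x d = ∑ i, x i := by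
  unfold pfx
  exact Finset.sum_congr rfl (fun i _ => by simp [i.isLt])

lemma pfx_sub (d : ℕ) (x y : Fin d → ℝ) (k : ℕ) :
    pfx d (fun i => x i - y i) k = pfx d x k - pfx d y k := by
  unfold pfx
  rw [← Finset.sum_sub_distrib]
  exact Finset.sum_congr rfl (fun i _ => by split <;> simp)

lemma pfx_meet (d : ℕ) (p q : Fin d → ℝ) :
    ∀ k, k ≤ d → pfx d (meet d p q) k = min (pfx d p k) (pfx d q k) := by
  intro k
  induction k with
  | zero => intro _; simp [pfx_zero]
  | succ k ih =>
    intro hk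
    have hk' : k < d := by omega
    rw [pfx_succ d _ k hk', ih (le_of_lt hk')]
    simp only [meet]
    ring

/-- Abel-summation style lemma: if all prefix sums of `a` up to `d` are nonpositive and
`w` is decreasing and nonnegative, then all prefix sums of `w ⊙ a` are nonpositive. -/
lemma abel_nonpos (d : ℕ) (w a : Fin d → ℝ)
    (hdec : ∀ i j : Fin d, i ≤ j → w j ≤ w i) (hnn : ∀ i, 0 ≤ w i)
    (hS : ∀ k, k ≤ d → pfx d a k ≤ 0) :
    ∀ k, k ≤ d → pfx d (fun i => w i * a i) k ≤ 0 := by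
  have key : ∀ k (hk : k < d),
      pfx d (fun i => w i * a i) (k + 1) ≤ w ⟨k, hk⟩ * pfx d a (k + 1) := by
    intro k
    induction k with
    | zero =>
      intro hk
      rw [pfx_succ d _ 0 hk, pfx_succ d a 0 hk, pfx_zero, pfx_zero]
      simp
    | succ k ih =>
      intro hk
      have hk1 : k < d := by omega
      have h1 := ih hk1
      rw [pfx_succ d (fun i => w i * a i) (k+1) hk, pfx_succ d a (k+1) hk]
      have hwle : w ⟨k+1, hk⟩ ≤ w ⟨k, hk1⟩ := hdec _ _ (by simp)
      have hwnn : 0 ≤ w ⟨k+1, hk⟩ := hnn _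
      have hSk : pfx d a (k+1) ≤ 0 := hS (k+1) (by omega)
      nlinarith [mul_nonpos_of_nonneg_of_nonpos (sub_nonneg.mpr hwle) hSk]
  intro k hk
  match k with
  | 0 => rw [pfx_zero]
  | Nat.succ j =>
    have hj : j < d := by omega
    calc pfx d (fun i => w i * a i) (j + 1) ≤ w ⟨j, hj⟩ * pfx d a (j + 1) := key j hj
    _ ≤ 0 := mul_nonpos_of_nonneg_of_nonpos (hnn _) (hS (j+1) hk)

/-- modular form of Theorem 2: for `p, q ∈ P_d` with meet `m = p ∧ q`
and decreasingly ordered nonnegative vectors `r, n` with the stated normalizations,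
the residual vectors satisfy `n ⊙ r ⊙ m ≺ n ⊙ r ⊙ q`. -/
theorem thrifty_residual_majorized (d : ℕ) (p q : Fin d → ℝ)
    (hp : memP d p) (hq : memP d q)
    (r n : Fin d → ℝ)
    (hr_dec : ∀ i j : Fin d, i ≤ j → r j ≤ r i) (hr_nonneg : ∀ i, 0 ≤ r i)
    (hn_dec : ∀ i j : Fin d, i ≤ j → n j ≤ n i) (hn_nonneg : ∀ i, 0 ≤ n i)
    (hrm : ∑ i, r i * meet d p q i = 1) (hrq : ∑ i, r i * q i = 1)
    (hnrm : ∑ i, n i * (r i * meet d p q i) = 1)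
    (hnrq : ∑ i, n i * (r i * q i) = 1) :
    Maj d (fun i => n i * (r i * meet d p q i)) (fun i => n i * (r i * q i)) := by
  constructor
  · intro k hk
    have hS1 : ∀ k, k ≤ d → pfx d (fun i => meet d p q i - q i) k ≤ 0 := by
      intro k hk
      rw [pfx_sub, pfx_meet d p q k hk]
      have := min_le_right (pfx d p k) (pfx d q k)
      linarith
    have hS2 : ∀ k, k ≤ d → pfx d (fun i => r i * (meet d p q i - q i)) k ≤ 0 :=
      abel_nonpos d r _ hr_dec hr_nonneg hS1
    have hS3 : ∀ k, k ≤ d →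
        pfx d (fun i => n i * (r i * (meet d p q i - q i))) k ≤ 0 :=
      abel_nonpos d n _ hn_dec hn_nonneg hS2
    have h := hS3 k (le_of_lt hk)
    have heq : pfx d (fun i => n i * (r i * (meet d p q i - q i))) k
        = pfx d (fun i => n i * (r i * meet d p q i) - n i * (r i * q i)) k := by
      congr 1; funext i; ring
    rw [heq, pfx_sub] at h
    linarith
  · rw [pfx_all, pfx_all, hnrm, hnrq]


end
end

section
/- Let p, q ∈ P_d with all entries of q strictly positive, and let s ∈ {2, …, d} be such that E_s(q) ≥ E_s(p). Then min over l ∈ {1, …, s−1} of (E_l(p) − E_s(p))/(max(E_l(p), E_l(q)) − E_s(q)) equals min over l ∈ {1, …, s−1} of (E_l(p) − E_s(p))/(E_l(q) − E_s(q)). (This is the key step showing that each ratio of the Vidal recursion for converting p into the meet p ∧ q coincides with the corresponding ratio for converting p into q.) -/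
open Finset

noncomputable section

lemma Etail_one' (d : ℕ) (x : Fin d → ℝ) : Etail d x 1 = ∑ i, x i := by
  unfold Etail
  apply Finset.sum_congr rfl
  intro i _
  simp

lemma Etail_anti' (d : ℕ) (x : Fin d → ℝ) (hx : ∀ i, 0 ≤ x i) {l l' : ℕ}
    (h : l ≤ l') : Etail d x l' ≤ Etail d x l := by
  unfold Etail
  apply Finset.sum_le_sum
  intro i _
  by_cases h1 : l' ≤ (i : ℕ) + 1
  · rw [if_pos h1, if_pos (le_trans h h1)]
  · rw [if_neg h1]
    split
    · exact hx i
    · exact le_rfl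

lemma Etail_sub_pos' (d : ℕ) (q : Fin d → ℝ) (hqpos : ∀ i, 0 < q i)
    {l s : ℕ} (hl : 1 ≤ l) (hls : l < s) (hsd : s ≤ d) :
    0 < Etail d q l - Etail d q s := by
  unfold Etail
  rw [← Finset.sum_sub_distrib]
  apply Finset.sum_pos'
  · intro i _
    by_cases h1 : s ≤ (i : ℕ) + 1
    · rw [if_pos h1, if_pos (by omega)]; simp
    · rw [if_neg h1]
      split
      · simpa using (hqpos i).le
      · simp
  · refine ⟨⟨l - 1, by omega⟩, Finset.mem_univ _, ?_⟩
    rw [if_pos (by simp; omega), if_neg (by simp; omega)]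
    simpa using hqpos _

/-- key step of Theorem 1: for `s ∈ {2,…,d}` with `E_s(q) ≥ E_s(p)`,
the minimum over `l ∈ {1,…,s−1}` of `(E_l(p) − E_s(p)) / (max(E_l(p), E_l(q)) − E_s(q))`
equals the minimum of `(E_l(p) − E_s(p)) / (E_l(q) − E_s(q))`. -/
theorem vidal_ratio_meet_step (d : ℕ) (p q : Fin d → ℝ)
    (hp : memP d p) (hq : memP d q) (hqpos : ∀ i, 0 < q i)
    (s : ℕ) (hs2 : 2 ≤ s) (hsd : s ≤ d)
    (hEs : Etail d p s ≤ Etail d q s) :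
    ((Finset.Icc 1 (s - 1)).inf' (Finset.nonempty_Icc.mpr (by omega))
        fun l => (Etail d p l - Etail d p s) /
          (max (Etail d p l) (Etail d q l) - Etail d q s))
      = (Finset.Icc 1 (s - 1)).inf' (Finset.nonempty_Icc.mpr (by omega))
          fun l => (Etail d p l - Etail d p s) / (Etail d q l - Etail d q s) := by

  obtain ⟨pmono, ppos, psum⟩ := hp
  obtain ⟨qmono, qpos, qsum⟩ := hq
  have hE1p : Etail d p 1 = 1 := by rw [Etail_one', psum]
  have hE1q : Etail d q 1 = 1 := by rw [Etail_one', qsum]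
  have hqsub : ∀ l ∈ Finset.Icc 1 (s - 1), 0 < Etail d q l - Etail d q s := by
    intro l hl
    rw [Finset.mem_Icc] at hl
    exact Etail_sub_pos' d q hqpos hl.1 (by omega) hsd
  have hnum : ∀ l ∈ Finset.Icc 1 (s - 1), 0 ≤ Etail d p l - Etail d p s := by
    intro l hl
    rw [Finset.mem_Icc] at hl
    have := Etail_anti' d p ppos (show l ≤ s by omega)
    linarith
  have h1mem : (1 : ℕ) ∈ Finset.Icc 1 (s - 1) := Finset.mem_Icc.mpr ⟨le_refl _, by omega⟩
  apply le_antisymm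
  · apply Finset.le_inf'
    intro l hl
    refine le_trans (Finset.inf'_le _ hl) ?_
    have h1 := hqsub l hl
    have h2 : Etail d q l - Etail d q s ≤ max (Etail d p l) (Etail d q l) - Etail d q s := by
      have := le_max_right (Etail d p l) (Etail d q l); linarith
    exact div_le_div_of_nonneg_left (hnum l hl) h1 h2
  · obtain ⟨l, hl, hlmin⟩ := Finset.exists_mem_eq_inf' ⟨1, h1mem⟩
      (fun l => (Etail d p l - Etail d p s) / (max (Etail d p l) (Etail d q l) - Etail d q s))
    rw [hlmin]
    rcases le_or_gt (Etail d p l) (Etail d q l) with hpq | hpq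
    · rw [max_eq_right hpq]
      exact Finset.inf'_le _ hl
    · rw [max_eq_left hpq.le]
      refine le_trans (Finset.inf'_le _ h1mem) ?_
      rw [hE1p, hE1q]
      have hd1 : 0 < 1 - Etail d q s := by
        have := hqsub 1 h1mem; rw [hE1q] at this; linarith
      have hd2 : 0 < Etail d p l - Etail d q s := by
        have := hqsub l hl; linarith
      rw [div_le_div_iff₀ hd1 hd2]
      have hple : Etail d p l ≤ 1 := by
        rw [Finset.mem_Icc] at hl
        have := Etail_anti' d p ppos (show 1 ≤ l from hl.1)
        linarith
      nlinarith [hEs, hple]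


end
end
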